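/- Let d ≥ 1, k ≥ 2d+1 and m ≥ d be integers, and let G be the graph consisting of a clique S = {s₁, …, s_k} of size k together with, for each i ∈ {1, …, k}, a set of m additional vertices each adjacent exactly to sᵢ (degree-one pendant vertices). Then the number of maximal d-cuts of G (counted as distinct edge cuts) is exactly (binom(m, d))^k; these are precisely the edge cuts that contain, for each sᵢ, exactly d of the edges between sᵢ and its pendant neighbors and no other edges. -/

import Mathlib

variable {V : Type*}

/-- A `d`-cut of a simple graph `G`: a partition `(A, B)` of the vertex set into two
nonempty parts such that every vertex of `A` has at most `d` neighbors in `B` and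
every vertex of `B` has at most `d` neighbors in `A`. -/
def IsDCut (G : SimpleGraph V) (d : ℕ) (A B : Set V) : Prop :=
  A.Nonempty ∧ B.Nonempty ∧ Disjoint A B ∧ A ∪ B = Set.univ ∧
    (∀ v ∈ A, (G.neighborSet v ∩ B).ncard ≤ d) ∧
    (∀ v ∈ B, (G.neighborSet v ∩ A).ncard ≤ d)

/-- A vertex set `T` is monochromatic if every `d`-cut of `G` has `T` entirely on one side. -/
def Monochromatic (G : SimpleGraph V) (d : ℕ) (T : Set V) : Prop :=
  ∀ A B : Set V, IsDCut G d A B → T ⊆ A ∨ T ⊆ B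

/-- The edge cut of a cut `(A, B)`: the set of edges of `G` with one endpoint in `A`
and the other endpoint in `B`. -/
def edgeCut (G : SimpleGraph V) (A B : Set V) : Set (Sym2 V) :=
  {e | e ∈ G.edgeSet ∧ ∃ u v, e = s(u, v) ∧ u ∈ A ∧ v ∈ B}

/-- A minimal `d`-cut: no `d`-cut has an edge cut that is a proper subset of its edge cut. -/
def IsMinimalDCut (G : SimpleGraph V) (d : ℕ) (A B : Set V) : Prop :=
  IsDCut G d A B ∧ ∀ A' B' : Set V, IsDCut G d A' B' → ¬ edgeCut G A' B' ⊂ edgeCut G A B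

/-- A maximal `d`-cut: no `d`-cut has an edge cut that properly contains its edge cut. -/
def IsMaximalDCut (G : SimpleGraph V) (d : ℕ) (A B : Set V) : Prop :=
  IsDCut G d A B ∧ ∀ A' B' : Set V, IsDCut G d A' B' → ¬ edgeCut G A B ⊂ edgeCut G A' B'

/-- The graph consisting of a clique `S = {s₁, …, s_k}` (the vertices `Sum.inl i`)
together with, for each `i`, a set of `m` pendant vertices `Sum.inr (i, j)` each
adjacent exactly to `sᵢ`. -/
def starCliqueGraph (k m : ℕ) : SimpleGraph (Fin k ⊕ Fin k × Fin m) :=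
  SimpleGraph.fromRel (fun a b =>
    (∃ i j : Fin k, a = Sum.inl i ∧ b = Sum.inl j) ∨
    (∃ (i : Fin k) (j : Fin m), a = Sum.inl i ∧ b = Sum.inr (i, j)))

/-!
A clique with more than `2 * d` vertices lies on one side of every `d`-cut: otherwise a clique
vertex on each side sees all clique vertices on the other side, so each side holds at most `d`
of them. Hence a `d`-cut of `starCliqueGraph k m` has the clique on one side and, on the other,
a set of pendant vertices given by a family `P i ⊆ Fin m` with all `|P i| ≤ d`, not all empty;
its edge cut is the set of pendant edges to these vertices. Since `P` determines the edge cut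
monotonically and injectively, maximal `d`-cuts correspond to maximal such families, which are
exactly those with all `|P i| = d`.
-/

theorem IsDCut.symm {G : SimpleGraph V} {d : ℕ} {A B : Set V} (h : IsDCut G d A B) :
    IsDCut G d B A :=
  ⟨h.2.1, h.1, h.2.2.1.symm, Set.union_comm A B ▸ h.2.2.2.1, h.2.2.2.2.2, h.2.2.2.2.1⟩

theorem IsDCut.isCompl {G : SimpleGraph V} {d : ℕ} {A B : Set V} (h : IsDCut G d A B) :
    IsCompl A B :=
  ⟨h.2.2.1, codisjoint_iff.2 h.2.2.2.1⟩

theorem edgeCut_comm (G : SimpleGraph V) (A B : Set V) : edgeCut G A B = edgeCut G B A := by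
  ext e
  refine and_congr_right fun _ => ⟨?_, ?_⟩ <;>
    exact fun ⟨u, v, he, hu, hv⟩ => ⟨v, u, he.trans Sym2.eq_swap, hv, hu⟩

theorem setOf_edgeCut_isMaximalDCut (G : SimpleGraph V) (d : ℕ) :
    {F | ∃ A B, IsMaximalDCut G d A B ∧ edgeCut G A B = F} =
      {F | Maximal (fun F => ∃ A B, IsDCut G d A B ∧ edgeCut G A B = F) F} := by
  ext F
  simp only [Set.mem_ofPred_eq, Set.maximal_iff_forall_ssuperset, IsMaximalDCut]
  constructor
  · rintro ⟨A, B, ⟨hcut, hmax⟩, rfl⟩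
    exact ⟨⟨A, B, hcut, rfl⟩, fun F' hF' ⟨A', B', hcut', hF'eq⟩ => hmax A' B' hcut' (hF'eq ▸ hF')⟩
  · rintro ⟨⟨A, B, hcut, rfl⟩, hmax⟩
    exact ⟨A, B, ⟨hcut, fun A' B' hcut' hss => hmax hss ⟨A', B', hcut', rfl⟩⟩, rfl⟩

theorem SimpleGraph.IsClique.monochromatic [Finite V] {G : SimpleGraph V} {d : ℕ} {s : Set V}
    (hs : G.IsClique s) (hcard : 2 * d < s.ncard) : Monochromatic G d s := by
  intro A B hcut
  have hAB := hcut.isCompl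
  by_contra! hsplit
  obtain ⟨⟨x, hxs, hxA⟩, ⟨y, hys, hyB⟩⟩ := And.imp Set.not_subset.1 Set.not_subset.1 hsplit
  have hxB : x ∈ B := hAB.compl_eq ▸ hxA
  have hyA : y ∈ A := by simpa [← hAB.compl_eq] using hyB
  have hsA : s ∩ A ⊆ G.neighborSet x ∩ A := fun z ⟨hzs, hzA⟩ =>
    ⟨hs hxs hzs fun hxz => hxA (hxz ▸ hzA), hzA⟩
  have hsB : s ∩ B ⊆ G.neighborSet y ∩ B := fun z ⟨hzs, hzB⟩ =>
    ⟨hs hys hzs fun hyz => hyB (hyz ▸ hzB), hzB⟩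
  have : s.ncard ≤ d + d := calc
    s.ncard = (s ∩ A ∪ s ∩ B).ncard := by
      rw [← Set.inter_union_distrib_left, hcut.2.2.2.1, Set.inter_univ]
    _ ≤ (s ∩ A).ncard + (s ∩ B).ncard := Set.ncard_union_le _ _
    _ ≤ (G.neighborSet x ∩ A).ncard + (G.neighborSet y ∩ B).ncard :=
      add_le_add (Set.ncard_le_ncard hsA) (Set.ncard_le_ncard hsB)
    _ ≤ d + d := add_le_add (hcut.2.2.2.2.2 x hxB) (hcut.2.2.2.2.1 y hyA)
  omega

section SetFamilies

variable {ι α : Type*}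

theorem maximal_forall_ncard_le_and_ne_bot_iff [Finite α] [Nonempty ι] {d : ℕ} (hd : 1 ≤ d)
    (hdα : d ≤ Nat.card α) {P : ι → Set α} :
    Maximal (fun Q : ι → Set α => (∀ i, (Q i).ncard ≤ d) ∧ Q ≠ ⊥) P ↔ ∀ i, (P i).ncard = d := by
  classical
  constructor
  · rintro ⟨⟨hle, hne⟩, hmax⟩ i
    by_contra hPi
    obtain ⟨a, ha⟩ : ∃ a, a ∉ P i := by
      by_contra! hall
      refine hPi (le_antisymm (hle i) ?_)
      rwa [Set.eq_univ_of_forall hall, Set.ncard_univ]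
    have hPQ : P ≤ Function.update P i (insert a (P i)) := by
      intro i'
      rcases eq_or_ne i' i with rfl | hi'
      · simp
      · simp [hi']
    have hQ : ∀ i', (Function.update P i (insert a (P i)) i').ncard ≤ d := by
      intro i'
      rcases eq_or_ne i' i with rfl | hi'
      · simpa using (Set.ncard_insert_le a (P i')).trans (lt_of_le_of_ne (hle i') hPi)
      · simpa [hi'] using hle i'
    exact ha (hmax ⟨hQ, ne_bot_of_le_ne_bot hne hPQ⟩ hPQ i (by simp))
  · intro hP
    refine ⟨⟨fun i => (hP i).le, fun hbot => ?_⟩, fun Q ⟨hQ, _⟩ hPQ i => ?_⟩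
    · have := hP (Classical.arbitrary ι)
      simp [hbot] at this
      omega
    · exact (Set.eq_of_subset_of_ncard_le (hPQ i) ((hQ i).trans (hP i).ge)).ge

theorem Nat.card_subtype_ncard_eq [Fintype α] (d : ℕ) :
    Nat.card {s : Set α // s.ncard = d} = (Fintype.card α).choose d := by
  have e : {s : Set α // s.ncard = d} ≃ {t : Finset α // t.card = d} :=
    (Fintype.finsetEquivSet.subtypeEquiv fun t => by
      rw [Fintype.finsetEquivSet_apply, Set.ncard_coe_finset]).symm
  rw [Nat.card_congr e, Nat.card_eq_fintype_card, Fintype.card_finset_len]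

theorem ncard_setOf_forall_ncard_eq [Fintype ι] [Fintype α] (d : ℕ) :
    {P : ι → Set α | ∀ i, (P i).ncard = d}.ncard = (Fintype.card α).choose d ^ Fintype.card ι := by
  have e : {P : ι → Set α | ∀ i, (P i).ncard = d} ≃ (ι → {s : Set α // s.ncard = d}) :=
    Equiv.subtypePiEquivPi (β := fun _ : ι => Set α) (p := fun _ s => s.ncard = d)
  rw [← Nat.card_coe_set_eq, Nat.card_congr e, Nat.card_pi, Finset.prod_const,
    Nat.card_subtype_ncard_eq, Finset.card_univ]

end SetFamilies

namespace starCliqueGraph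

open Sum

variable {k m d : ℕ}

@[simp]
theorem adj_inl_inl {i i' : Fin k} : (starCliqueGraph k m).Adj (inl i) (inl i') ↔ i ≠ i' := by
  simp [starCliqueGraph]

@[simp]
theorem adj_inl_inr {i i' : Fin k} {j : Fin m} :
    (starCliqueGraph k m).Adj (inl i) (inr (i', j)) ↔ i = i' := by
  simp [starCliqueGraph, eq_comm]

@[simp]
theorem adj_inr_inl {i i' : Fin k} {j : Fin m} :
    (starCliqueGraph k m).Adj (inr (i, j)) (inl i') ↔ i' = i := by
  rw [SimpleGraph.adj_comm, adj_inl_inr]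

@[simp]
theorem not_adj_inr_inr {p q : Fin k × Fin m} : ¬ (starCliqueGraph k m).Adj (inr p) (inr q) := by
  simp [starCliqueGraph]

theorem isClique_range_inl : (starCliqueGraph k m).IsClique (Set.range inl) := by
  rintro _ ⟨i, rfl⟩ _ ⟨i', rfl⟩ hii'
  simpa using hii'

theorem neighborSet_inr (i : Fin k) (j : Fin m) :
    (starCliqueGraph k m).neighborSet (inr (i, j)) = {inl i} := by
  ext (i' | p) <;> simp

def pendantSet (P : Fin k → Set (Fin m)) : Set (Fin k ⊕ Fin k × Fin m) :=
  {x | Sum.elim (fun _ => False) (fun p => p.2 ∈ P p.1) x}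

@[simp]
theorem inl_notMem_pendantSet {P : Fin k → Set (Fin m)} {i : Fin k} : inl i ∉ pendantSet P :=
  id

@[simp]
theorem inr_mem_pendantSet {P : Fin k → Set (Fin m)} {i : Fin k} {j : Fin m} :
    inr (i, j) ∈ pendantSet P ↔ j ∈ P i :=
  Iff.rfl

theorem neighborSet_inl_inter_pendantSet (P : Fin k → Set (Fin m)) (i : Fin k) :
    (starCliqueGraph k m).neighborSet (inl i) ∩ pendantSet P = (fun j => inr (i, j)) '' P i := by
  ext (i' | ⟨i', j⟩)
  · simp
  · simp only [Set.mem_inter_iff, SimpleGraph.mem_neighborSet, adj_inl_inr, inr_mem_pendantSet]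
    aesop

theorem pendantSet_nonempty_iff {P : Fin k → Set (Fin m)} : (pendantSet P).Nonempty ↔ P ≠ ⊥ := by
  simp [Set.Nonempty, funext_iff, Set.eq_empty_iff_forall_notMem]

def pendantEdges (P : Fin k → Set (Fin m)) : Set (Sym2 (Fin k ⊕ Fin k × Fin m)) :=
  ⋃ i : Fin k, (fun j : Fin m => (s(inl i, inr (i, j)) : Sym2 (Fin k ⊕ Fin k × Fin m))) '' P i

theorem mk_mem_pendantEdges {P : Fin k → Set (Fin m)} {i : Fin k} {j : Fin m} :
    s(inl i, inr (i, j)) ∈ pendantEdges P ↔ j ∈ P i := by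
  simp [pendantEdges]

theorem pendantEdges_subset_pendantEdges {P Q : Fin k → Set (Fin m)} :
    pendantEdges P ⊆ pendantEdges Q ↔ P ≤ Q := by
  refine ⟨fun h i j hj => mk_mem_pendantEdges.1 (h (mk_mem_pendantEdges.2 hj)), ?_⟩
  rintro hPQ _ ⟨_, ⟨i, rfl⟩, j, hj, rfl⟩
  exact mk_mem_pendantEdges.2 (hPQ i hj)

theorem pendantEdges_injective : Function.Injective (pendantEdges (k := k) (m := m)) :=
  fun _ _ h => le_antisymm (pendantEdges_subset_pendantEdges.1 h.le)
    (pendantEdges_subset_pendantEdges.1 h.ge)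

theorem edgeCut_compl_pendantSet (P : Fin k → Set (Fin m)) :
    edgeCut (starCliqueGraph k m) (pendantSet P)ᶜ (pendantSet P) = pendantEdges P := by
  ext e
  constructor
  · rintro ⟨he, u, (i | ⟨i, j⟩), rfl, hu, hv⟩
    · exact absurd hv inl_notMem_pendantSet
    · have hu' : u ∈ (starCliqueGraph k m).neighborSet (inr (i, j)) :=
        ((SimpleGraph.mem_edgeSet _).1 he).symm
      rw [neighborSet_inr, Set.mem_singleton_iff] at hu'
      subst hu'
      exact mk_mem_pendantEdges.2 hv
  · rintro ⟨_, ⟨i, rfl⟩, j, hj, rfl⟩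
    exact ⟨by simp, inl i, inr (i, j), rfl, inl_notMem_pendantSet, hj⟩

theorem isDCut_compl_pendantSet_iff [NeZero k] (hd : 1 ≤ d) {P : Fin k → Set (Fin m)} :
    IsDCut (starCliqueGraph k m) d (pendantSet P)ᶜ (pendantSet P) ↔
      (∀ i, (P i).ncard ≤ d) ∧ P ≠ ⊥ := by
  have hcard (i : Fin k) :
      ((starCliqueGraph k m).neighborSet (inl i) ∩ pendantSet P).ncard = (P i).ncard := by
    rw [neighborSet_inl_inter_pendantSet, Set.ncard_image_of_injective _
      fun _ _ h => by simpa using h]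
  constructor
  · rintro ⟨-, hne, -, -, hout, -⟩
    exact ⟨fun i => hcard i ▸ hout (inl i) inl_notMem_pendantSet, pendantSet_nonempty_iff.1 hne⟩
  · rintro ⟨hle, hne⟩
    refine ⟨⟨inl 0, inl_notMem_pendantSet⟩, pendantSet_nonempty_iff.2 hne, disjoint_compl_left,
      Set.compl_union_self _, ?_, ?_⟩
    · rintro (i | ⟨i, j⟩) hv
      · exact hcard i ▸ hle i
      · simp [neighborSet_inr]
    · rintro (i | ⟨i, j⟩) hv
      · exact absurd hv inl_notMem_pendantSet
      · rw [neighborSet_inr]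
        exact (Set.ncard_le_ncard Set.inter_subset_left).trans (by simpa using hd)

theorem eq_pendantSet_of_range_inl_subset {A B : Set (Fin k ⊕ Fin k × Fin m)}
    (hAB : IsCompl A B) (hA : Set.range inl ⊆ A) :
    B = pendantSet fun i => {j | inr (i, j) ∈ B} := by
  ext (i | ⟨i, j⟩)
  · simpa using Set.disjoint_left.1 hAB.disjoint (hA ⟨i, rfl⟩)
  · rfl

theorem _root_.IsDCut.exists_pendantSet {A B : Set (Fin k ⊕ Fin k × Fin m)}
    (h : IsDCut (starCliqueGraph k m) d A B) (hk : 2 * d < k) :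
    ∃ P : Fin k → Set (Fin m), (A = (pendantSet P)ᶜ ∧ B = pendantSet P) ∨
      (A = pendantSet P ∧ B = (pendantSet P)ᶜ) := by
  have hclique : 2 * d < (Set.range (inl : Fin k → Fin k ⊕ Fin k × Fin m)).ncard := by
    rwa [Set.ncard_range_of_injective inl_injective, Nat.card_fin]
  rcases isClique_range_inl.monochromatic hclique A B h with hA | hB
  · have hBP := eq_pendantSet_of_range_inl_subset h.isCompl hA
    exact ⟨_, .inl ⟨by rw [← hBP, h.isCompl.symm.compl_eq], hBP⟩⟩
  · have hAP := eq_pendantSet_of_range_inl_subset h.isCompl.symm hB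
    exact ⟨_, .inr ⟨hAP, by rw [← hAP, h.isCompl.compl_eq]⟩⟩

theorem exists_isDCut_edgeCut_eq_iff (hd : 1 ≤ d) (hk : 2 * d < k)
    {F : Set (Sym2 (Fin k ⊕ Fin k × Fin m))} :
    (∃ A B, IsDCut (starCliqueGraph k m) d A B ∧ edgeCut (starCliqueGraph k m) A B = F) ↔
      ∃ P, ((∀ i, (P i).ncard ≤ d) ∧ P ≠ ⊥) ∧ pendantEdges P = F := by
  have : NeZero k := ⟨by omega⟩
  constructor
  · rintro ⟨A, B, h, rfl⟩
    obtain ⟨P, ⟨rfl, rfl⟩ | ⟨rfl, rfl⟩⟩ := h.exists_pendantSet hk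
    · exact ⟨P, (isDCut_compl_pendantSet_iff hd).1 h, (edgeCut_compl_pendantSet P).symm⟩
    · exact ⟨P, (isDCut_compl_pendantSet_iff hd).1 h.symm,
        by rw [edgeCut_comm, edgeCut_compl_pendantSet]⟩
  · rintro ⟨P, hP, rfl⟩
    exact ⟨_, _, (isDCut_compl_pendantSet_iff hd).2 hP, edgeCut_compl_pendantSet P⟩

theorem setOf_edgeCut_isMaximalDCut_eq (hd : 1 ≤ d) (hk : 2 * d < k) (hm : d ≤ m) :
    {F | ∃ A B, IsMaximalDCut (starCliqueGraph k m) d A B ∧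
        edgeCut (starCliqueGraph k m) A B = F} =
      pendantEdges '' {P | ∀ i, (P i).ncard = d} := by
  have : Nonempty (Fin k) := ⟨⟨0, by omega⟩⟩
  have hdm : d ≤ Nat.card (Fin m) := by simpa using hm
  simp_rw [setOf_edgeCut_isMaximalDCut, exists_isDCut_edgeCut_eq_iff hd hk]
  rw [← image_monotone_setOfPred_maximal fun _ _ _ _ => pendantEdges_subset_pendantEdges]
  simp_rw [maximal_forall_ncard_le_and_ne_bot_iff hd hdm]

end starCliqueGraph

/-- For `d ≥ 1`, `k ≥ 2d+1` and `m ≥ d`, the set of edge cuts of maximal `d`-cuts of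
`starCliqueGraph k m` has exactly `(binom(m, d))^k` members, and these are precisely
the edge cuts consisting, for each `sᵢ`, of exactly `d` edges between `sᵢ` and its
pendant neighbors, and no other edges. -/
theorem starCliqueGraph_maximal_dcut_count (d k m : ℕ) (hd : 1 ≤ d)
    (hk : 2 * d + 1 ≤ k) (hm : d ≤ m) :
    ({F : Set (Sym2 (Fin k ⊕ Fin k × Fin m)) |
        ∃ A B, IsMaximalDCut (starCliqueGraph k m) d A B ∧
          edgeCut (starCliqueGraph k m) A B = F}).ncard = (m.choose d) ^ k ∧
    {F : Set (Sym2 (Fin k ⊕ Fin k × Fin m)) |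
        ∃ A B, IsMaximalDCut (starCliqueGraph k m) d A B ∧
          edgeCut (starCliqueGraph k m) A B = F} =
      {F : Set (Sym2 (Fin k ⊕ Fin k × Fin m)) |
        ∃ P : Fin k → Set (Fin m), (∀ i, (P i).ncard = d) ∧
          F = ⋃ i : Fin k,
            (fun j : Fin m => (s(Sum.inl i, Sum.inr (i, j)) :
              Sym2 (Fin k ⊕ Fin k × Fin m))) '' P i} := by
  have hcuts := starCliqueGraph.setOf_edgeCut_isMaximalDCut_eq hd (show 2 * d < k by omega) hm
  refine ⟨?_, hcuts.trans ?_⟩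
  · rw [hcuts, Set.ncard_image_of_injective _ starCliqueGraph.pendantEdges_injective,
      ncard_setOf_forall_ncard_eq, Fintype.card_fin, Fintype.card_fin]
  · ext F
    simp [starCliqueGraph.pendantEdges, eq_comm]
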